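/- Assume the ideal I is t-unital. Then for every t-unital A-module L and every A-module M, the map g ↦ μ_M ∘ g is a bijection from Hom_A(L, I ⊗_A M) to Hom_A(L, M). (Thus the functor I ⊗_A − is right adjoint to the inclusion of t-unital A-modules into all A-modules.) -/
import Mathlib


open TensorProduct

/-- The natural `A`-linear map `μ_M : I ⊗[A] M → M` determined by `i ⊗ m ↦ i • m`.
An `A`-module `M` is *t-unital* (with respect to the ideal `I`) if `μ_M` is bijective. -/
noncomputable def muMap {A : Type*} [CommRing A] (I : Ideal A)
    (M : Type*) [AddCommGroup M] [Module A M] : I ⊗[A] M →ₗ[A] M :=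
  TensorProduct.lift ((LinearMap.lsmul A M).comp I.subtype)

/-- The natural `A`-linear map `ε_M : M → Hom_A(I, M)`, `m ↦ (i ↦ i • m)`.
An `A`-module `M` is *c-unital* (with respect to the ideal `I`) if `ε_M` is bijective. -/
def epsMap {A : Type*} [CommRing A] (I : Ideal A)
    (M : Type*) [AddCommGroup M] [Module A M] : M →ₗ[A] (I →ₗ[A] M) :=
  ((LinearMap.lsmul A M).comp I.subtype).flip

lemma muMap_tmul {A : Type*} [CommRing A] (I : Ideal A)
    (M : Type*) [AddCommGroup M] [Module A M] (i : I) (m : M) :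
    muMap I M (i ⊗ₜ[A] m) = (i : A) • m := rfl

lemma smul_eq_tmul_muMap {A : Type*} [CommRing A] (I : Ideal A)
    (M : Type*) [AddCommGroup M] [Module A M] (i : I) (x : I ⊗[A] M) :
    (i : A) • x = i ⊗ₜ[A] (muMap I M x) := by
  induction x using TensorProduct.induction_on with
  | zero => simp
  | tmul j m =>
      rw [muMap_tmul, TensorProduct.smul_tmul']
      have : (i : A) • j = (j : A) • i := Subtype.ext (mul_comm _ _)
      rw [this, TensorProduct.smul_tmul]
  | add x y hx hy => simp [smul_add, hx, hy, TensorProduct.tmul_add]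

/-- If the ideal `I` is t-unital, then for every t-unital `A`-module `L` and every
`A`-module `M`, composition with `μ_M` is a bijection
`Hom_A(L, I ⊗[A] M) → Hom_A(L, M)` (so `I ⊗[A] -` is right adjoint to the
inclusion of t-unital modules). -/
theorem bijective_comp_muMap {A : Type*} [CommRing A] (I : Ideal A)
    (hI : Function.Bijective (muMap I I))
    (L : Type*) [AddCommGroup L] [Module A L]
    (hL : Function.Bijective (muMap I L))
    (M : Type*) [AddCommGroup M] [Module A M] :
    Function.Bijective (fun g : L →ₗ[A] (I ⊗[A] M) => (muMap I M) ∘ₗ g) := by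
  constructor
  · intro g₁ g₂ h
    have h' : ∀ l, muMap I M (g₁ l) = muMap I M (g₂ l) := fun l =>
      congrArg (fun f : L →ₗ[A] M => f l) h
    ext l
    obtain ⟨y, hy⟩ := hL.surjective l
    subst hy
    induction y using TensorProduct.induction_on with
    | zero => simp
    | tmul i l' =>
        rw [muMap_tmul, map_smul, map_smul, smul_eq_tmul_muMap,
          smul_eq_tmul_muMap, h']
    | add x y hx hy => simp only [map_add, hx, hy]
  · intro f
    let e := LinearEquiv.ofBijective (muMap I L) hL
    refine ⟨(f.lTensor I) ∘ₗ (e.symm : L →ₗ[A] I ⊗[A] L), ?_⟩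
    have key : ∀ y : I ⊗[A] L, muMap I M (f.lTensor I y) = f (muMap I L y) := by
      intro y
      induction y using TensorProduct.induction_on with
      | zero => simp
      | tmul i l' => simp [muMap_tmul]
      | add x y hx hy => simp only [map_add, hx, hy]
    ext l
    simp only [LinearMap.comp_apply, LinearEquiv.coe_coe, key]
    have : muMap I L (e.symm l) = e (e.symm l) := rfl
    rw [this, e.apply_symm_apply]
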